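/- Let (B,i,j) be an ADHM datum with μ(B,i,j) = 0. Define the character χ : G_V → ℂ* by χ(g) = ∏_{k∈I} det(g_k)^{-1}, and let G_V act on M × ℂ by g·((B,i,j), z) = (g·(B,i,j), χ(g)^{-1}·z). Then (B,i,j) is stable if and only if for every z ∈ ℂ with z ≠ 0, the closure (with respect to the standard topology of the finite-dimensional complex vector space M × ℂ) of the orbit { g·((B,i,j), z) : g ∈ G_V } does not intersect M × {0}. -/

import Mathlib

noncomputable section

open Filter Topology

section Aux

variable {E F G' : Type*} [NormedAddCommGroup E] [NormedSpace ℂ E]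
  [NormedAddCommGroup F] [NormedSpace ℂ F] [NormedAddCommGroup G'] [NormedSpace ℂ G']

theorem tendsto_clm_comp {α : Type*} {l : Filter α} {f : α → F →L[ℂ] G'} {g : α → E →L[ℂ] F}
    {f₀ : F →L[ℂ] G'} {g₀ : E →L[ℂ] F} (hf : Tendsto f l (𝓝 f₀)) (hg : Tendsto g l (𝓝 g₀)) :
    Tendsto (fun x => (f x).comp (g x)) l (𝓝 (f₀.comp g₀)) := by
  have hc : Continuous (fun p : (F →L[ℂ] G') × (E →L[ℂ] F) => p.1.comp p.2) :=
    isBoundedBilinearMap_comp.continuous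
  exact (hc.tendsto (f₀, g₀)).comp (hf.prodMk_nhds hg)

theorem det_eq_zero_of_ker_ne_bot [FiniteDimensional ℂ E] (f : E →ₗ[ℂ] E)
    (h : LinearMap.ker f ≠ ⊥) : LinearMap.det f = 0 := by
  by_contra hd
  set b := Module.finBasis ℂ E with hb
  have hm : IsUnit ((LinearMap.toMatrixAlgEquiv b) f) :=
    (Matrix.isUnit_iff_isUnit_det _).mpr (isUnit_iff_ne_zero.mpr
      (by rwa [show ((LinearMap.toMatrixAlgEquiv b) f) = LinearMap.toMatrix b b f from rfl,
        LinearMap.det_toMatrix]))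
  have hf : IsUnit f := by
    have h2 := hm.map (LinearMap.toMatrixAlgEquiv b).symm
    rwa [AlgEquiv.symm_apply_apply] at h2
  exact h ((LinearMap.isUnit_iff_ker_eq_bot f).mp hf)

theorem det_bound [FiniteDimensional ℂ E] :
    ∃ C : ℝ, 1 ≤ C ∧ ∀ A : E →L[ℂ] E,
      ‖LinearMap.det (A : E →ₗ[ℂ] E)‖ ≤ C * max 1 ‖A‖ ^ (Module.finrank ℂ E) := by
  haveI : ProperSpace (E →L[ℂ] E) := FiniteDimensional.proper ℂ _
  have hcomp : IsCompact (Metric.closedBall (0 : E →L[ℂ] E) 1) := isCompact_closedBall _ _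
  have hcont : Continuous fun A : E →L[ℂ] E => ‖LinearMap.det (A : E →ₗ[ℂ] E)‖ :=
    ContinuousLinearMap.continuous_det.norm
  obtain ⟨C₀, hC₀⟩ := (hcomp.image hcont).bddAbove
  refine ⟨max 1 C₀, le_max_left _ _, fun A => ?_⟩
  have hball : ∀ A' : E →L[ℂ] E, ‖A'‖ ≤ 1 → ‖LinearMap.det (A' : E →ₗ[ℂ] E)‖ ≤ max 1 C₀ := by
    intro A' hA'
    refine le_trans (hC₀ ⟨A', by simpa [Metric.mem_closedBall, dist_zero_right] using hA', rfl⟩)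
      (le_max_right _ _)
  rcases le_or_gt ‖A‖ 1 with hA | hA
  · calc ‖LinearMap.det (A : E →ₗ[ℂ] E)‖ ≤ max 1 C₀ := hball A hA
    _ = max 1 C₀ * 1 := by ring
    _ ≤ max 1 C₀ * max 1 ‖A‖ ^ Module.finrank ℂ E := by
        have h1 : (1:ℝ) ≤ max 1 ‖A‖ := le_max_left _ _
        have h2 : (1:ℝ) ≤ max 1 ‖A‖ ^ Module.finrank ℂ E := one_le_pow₀ h1
        have h3 : (0:ℝ) ≤ max 1 C₀ := le_trans zero_le_one (le_max_left _ _)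
        exact mul_le_mul_of_nonneg_left h2 h3
  · set c : ℂ := (‖A‖ : ℂ) with hc
    have hApos : (0:ℝ) < ‖A‖ := lt_trans zero_lt_one hA
    have hc0 : c ≠ 0 := Complex.ofReal_ne_zero.mpr hApos.ne'
    have hA0 : A = c • (c⁻¹ • A) := by rw [smul_smul, mul_inv_cancel₀ hc0, one_smul]
    have hnorm : ‖c⁻¹ • A‖ ≤ 1 := by
      have : ‖c⁻¹ • A‖ = ‖(c:ℂ)⁻¹‖ * ‖A‖ := by exact norm_smul (c⁻¹) A
      rw [this, norm_inv, hc, Complex.norm_real, Real.norm_eq_abs,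
        abs_of_nonneg (norm_nonneg A), inv_mul_cancel₀ hApos.ne']
    calc ‖LinearMap.det (A : E →ₗ[ℂ] E)‖
        = ‖LinearMap.det ((c • (c⁻¹ • A) : E →L[ℂ] E) : E →ₗ[ℂ] E)‖ := by rw [← hA0]
      _ = ‖c ^ Module.finrank ℂ E * LinearMap.det ((c⁻¹ • A : E →L[ℂ] E) : E →ₗ[ℂ] E)‖ := by
          rw [ContinuousLinearMap.coe_smul, LinearMap.det_smul]
      _ = ‖A‖ ^ Module.finrank ℂ E * ‖LinearMap.det ((c⁻¹ • A : E →L[ℂ] E) : E →ₗ[ℂ] E)‖ := by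
          rw [norm_mul, norm_pow]
          simp [hc, abs_of_nonneg (norm_nonneg A)]
      _ ≤ max 1 ‖A‖ ^ Module.finrank ℂ E * max 1 C₀ := by
          refine mul_le_mul (pow_le_pow_left₀ (norm_nonneg A) (le_max_right _ _) _)
            (hball _ hnorm) (norm_nonneg _) (by positivity)
      _ = max 1 C₀ * max 1 ‖A‖ ^ Module.finrank ℂ E := by ring

end Aux


/-- The data of a finite graph without edge loops, presented by its set `H` of oriented
edges over the vertex set `I`: source and target maps `src`, `tgt`, and a fixed-point-free
orientation-reversing involution `bar`. -/
structure GraphData (I H : Type) where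
  src : H → I
  tgt : H → I
  bar : H → H
  bar_invol : ∀ h, bar (bar h) = h
  bar_ne_self : ∀ h, bar h ≠ h
  src_bar : ∀ h, src (bar h) = tgt h
  tgt_bar : ∀ h, tgt (bar h) = src h
  no_loops : ∀ h, src h ≠ tgt h

/-- Transport of the fibres of a family of normed spaces along an equality of indices. -/
def vCast {I : Type} (V : I → Type)
    [∀ k, NormedAddCommGroup (V k)] [∀ k, NormedSpace ℂ (V k)]
    {k l : I} (e : k = l) : V k ≃L[ℂ] V l := by
  subst e
  exact ContinuousLinearEquiv.refl ℂ (V k)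

/-- Stability of an ADHM datum `(B, i, j)`: the only family of subspaces `S k ⊆ V k`
which is `B`-invariant and contained in `ker (j k)` is the zero family. -/
def IsStable {I H : Type} (G : GraphData I H) (V W : I → Type)
    [∀ k, NormedAddCommGroup (V k)] [∀ k, NormedSpace ℂ (V k)]
    [∀ k, NormedAddCommGroup (W k)] [∀ k, NormedSpace ℂ (W k)]
    (B : ∀ h : H, V (G.src h) →L[ℂ] V (G.tgt h))
    (j : ∀ k : I, V k →L[ℂ] W k) : Prop :=
  ∀ S : ∀ k : I, Submodule ℂ (V k),
    (∀ h : H, ∀ x ∈ S (G.src h), B h x ∈ S (G.tgt h)) →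
    (∀ k : I, ∀ x ∈ S k, j k x = 0) →
    ∀ k : I, S k = ⊥

/-- For an oriented edge `h`, the composite `A ∘ A'` of a map `A` along `h` and a map `A'`
along `bar h`, as an endomorphism of `V (tgt h)`. -/
def barComp {I H : Type} (G : GraphData I H) (V : I → Type)
    [∀ k, NormedAddCommGroup (V k)] [∀ k, NormedSpace ℂ (V k)] (h : H)
    (A : V (G.src h) →L[ℂ] V (G.tgt h))
    (A' : V (G.src (G.bar h)) →L[ℂ] V (G.tgt (G.bar h))) :
    V (G.tgt h) →L[ℂ] V (G.tgt h) :=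
  A.comp ((vCast V (G.tgt_bar h) : V (G.tgt (G.bar h)) →L[ℂ] V (G.src h)).comp
    (A'.comp ((vCast V (G.src_bar h)).symm : V (G.tgt h) →L[ℂ] V (G.src (G.bar h)))))

/-- The `k`-th component of the moment map `μ(B, i, j) = ε B B + i j`. -/
def momentMap {I H : Type} [Fintype H] [DecidableEq I] (G : GraphData I H)
    (V W : I → Type)
    [∀ k, NormedAddCommGroup (V k)] [∀ k, NormedSpace ℂ (V k)]
    [∀ k, NormedAddCommGroup (W k)] [∀ k, NormedSpace ℂ (W k)]
    (ε : H → ℂ)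
    (B : ∀ h : H, V (G.src h) →L[ℂ] V (G.tgt h))
    (i : ∀ k : I, W k →L[ℂ] V k) (j : ∀ k : I, V k →L[ℂ] W k) (k : I) :
    V k →L[ℂ] V k :=
  (∑ h : H, if e : G.tgt h = k then
      ((vCast V e : V (G.tgt h) →L[ℂ] V k).comp
        ((ε h • barComp G V h (B h) (B (G.bar h))).comp
          ((vCast V e).symm : V k →L[ℂ] V (G.tgt h))))
    else 0)
    + (i k).comp (j k)

/-- The action of `g ∈ G_V = ∏ₖ GL(V_k)` on the `B`-component of an ADHM datum. -/
def actB {I H : Type} (G : GraphData I H) (V : I → Type)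
    [∀ k, NormedAddCommGroup (V k)] [∀ k, NormedSpace ℂ (V k)]
    (g : ∀ k : I, V k ≃L[ℂ] V k)
    (B : ∀ h : H, V (G.src h) →L[ℂ] V (G.tgt h)) :
    ∀ h : H, V (G.src h) →L[ℂ] V (G.tgt h) :=
  fun h => ((g (G.tgt h) : V (G.tgt h) →L[ℂ] V (G.tgt h)).comp (B h)).comp
    ((g (G.src h)).symm : V (G.src h) →L[ℂ] V (G.src h))

/-- The action of `g ∈ G_V` on the `i`-component of an ADHM datum. -/
def actI {I : Type} (V W : I → Type)
    [∀ k, NormedAddCommGroup (V k)] [∀ k, NormedSpace ℂ (V k)]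
    [∀ k, NormedAddCommGroup (W k)] [∀ k, NormedSpace ℂ (W k)]
    (g : ∀ k : I, V k ≃L[ℂ] V k) (i : ∀ k : I, W k →L[ℂ] V k) :
    ∀ k : I, W k →L[ℂ] V k :=
  fun k => (g k : V k →L[ℂ] V k).comp (i k)

/-- The action of `g ∈ G_V` on the `j`-component of an ADHM datum. -/
def actJ {I : Type} (V W : I → Type)
    [∀ k, NormedAddCommGroup (V k)] [∀ k, NormedSpace ℂ (V k)]
    [∀ k, NormedAddCommGroup (W k)] [∀ k, NormedSpace ℂ (W k)]
    (g : ∀ k : I, V k ≃L[ℂ] V k) (j : ∀ k : I, V k →L[ℂ] W k) :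
    ∀ k : I, V k →L[ℂ] W k :=
  fun k => (j k).comp ((g k).symm : V k →L[ℂ] V k)

set_option maxHeartbeats 2000000
set_option synthInstance.maxHeartbeats 1000000

/-- Let `(B, i, j)` be an ADHM datum with `μ(B,i,j) = 0`. With
`χ(g) = ∏ₖ det(g_k)⁻¹` and the action `g · ((B,i,j), z) = (g·(B,i,j), χ(g)⁻¹ · z)` of
`G_V` on `M × ℂ`, the datum `(B,i,j)` is stable if and only if for every `z ≠ 0` the
closure of the orbit of `((B,i,j), z)` does not meet `M × {0}`. -/
theorem statement0
    {I H : Type} [Fintype I] [Fintype H] [DecidableEq I]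
    (G : GraphData I H) (V W : I → Type)
    [∀ k, NormedAddCommGroup (V k)] [∀ k, NormedSpace ℂ (V k)]
    [∀ k, FiniteDimensional ℂ (V k)]
    [∀ k, NormedAddCommGroup (W k)] [∀ k, NormedSpace ℂ (W k)]
    [∀ k, FiniteDimensional ℂ (W k)]
    (ε : H → ℂ) (hε0 : ∀ h, ε h ≠ 0) (hεbar : ∀ h, ε (G.bar h) = - ε h)
    (B : ∀ h : H, V (G.src h) →L[ℂ] V (G.tgt h))
    (i : ∀ k : I, W k →L[ℂ] V k) (j : ∀ k : I, V k →L[ℂ] W k)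
    (hμ : ∀ k : I, momentMap G V W ε B i j k = 0) :
    IsStable G V W B j ↔
      ∀ z : ℂ, z ≠ 0 →
        ∀ p ∈ closure {p : ((∀ h : H, V (G.src h) →L[ℂ] V (G.tgt h)) ×
              (∀ k : I, W k →L[ℂ] V k) × (∀ k : I, V k →L[ℂ] W k)) × ℂ |
            ∃ g : ∀ k : I, V k ≃L[ℂ] V k,
              p = ((actB G V g B, actI V W g i, actJ V W g j),
                (∏ k : I, (LinearMap.det
                  ((g k).toLinearEquiv : V k →ₗ[ℂ] V k))⁻¹)⁻¹ * z)},
          p.2 ≠ 0 := by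
  constructor
  · intro hst z hz p hp hp2
    rw [mem_closure_iff_seq_limit] at hp
    obtain ⟨u, hus, hulim⟩ := hp
    choose gs hgs using hus
    -- limits of the components
    have hB' : Tendsto (fun n => actB G V (gs n) B) atTop (𝓝 p.1.1) := by
      have h0 : Tendsto (fun n => (u n).1.1) atTop (𝓝 p.1.1) :=
        ((continuous_fst.comp continuous_fst).tendsto p).comp hulim
      have he : (fun n => (u n).1.1) = fun n => actB G V (gs n) B := by
        funext n; rw [hgs n]
      rwa [he] at h0
    have hJ' : Tendsto (fun n => actJ V W (gs n) j) atTop (𝓝 p.1.2.2) := by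
      have h0 : Tendsto (fun n => (u n).1.2.2) atTop (𝓝 p.1.2.2) :=
        ((continuous_snd.comp (continuous_snd.comp continuous_fst)).tendsto p).comp hulim
      have he : (fun n => (u n).1.2.2) = fun n => actJ V W (gs n) j := by
        funext n; rw [hgs n]
      rwa [he] at h0
    have hdet : Tendsto (fun n => ∏ k : I,
        LinearMap.det ((gs n k).toLinearEquiv : V k →ₗ[ℂ] V k)) atTop (𝓝 0) := by
      have h0 : Tendsto (fun n => (u n).2) atTop (𝓝 p.2) :=
        (continuous_snd.tendsto p).comp hulim
      have he : (fun n => (u n).2) = fun n =>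
          (∏ k : I, (LinearMap.det ((gs n k).toLinearEquiv : V k →ₗ[ℂ] V k))⁻¹)⁻¹ * z := by
        funext n; rw [hgs n]
      rw [he, hp2] at h0
      have h1 := h0.mul_const z⁻¹
      rw [zero_mul] at h1
      have he2 : (fun n =>
          (∏ k : I, (LinearMap.det ((gs n k).toLinearEquiv : V k →ₗ[ℂ] V k))⁻¹)⁻¹ * z * z⁻¹)
          = fun n => ∏ k : I, LinearMap.det ((gs n k).toLinearEquiv : V k →ₗ[ℂ] V k) := by
        funext n
        rw [mul_assoc, mul_inv_cancel₀ hz, mul_one, Finset.prod_inv_distrib, inv_inv]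
      rwa [he2] at h1
    -- the inverses, their norms
    set Ginv : ℕ → ∀ k, V k →L[ℂ] V k := fun n k => ((gs n k).symm : V k →L[ℂ] V k) with hGinv
    set t : ℕ → ℝ := fun n => ‖Ginv n‖ with ht
    -- determinant bounds
    choose C hC1 hCle using fun k => det_bound (E := V k)
    set D : ℕ := ∑ k : I, Module.finrank ℂ (V k) with hD
    have hCpos : ∀ k, (0:ℝ) < C k := fun k => lt_of_lt_of_le zero_lt_one (hC1 k)
    have hCC : (0:ℝ) < ∏ k : I, C k := Finset.prod_pos fun k _ => hCpos k
    have hmaxpos : ∀ n, (0:ℝ) < max 1 (t n) := fun n => lt_of_lt_of_le zero_lt_one (le_max_left _ _)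
    -- lower bound for the determinant product
    have hlow : ∀ n, ((∏ k : I, C k) * max 1 (t n) ^ D)⁻¹
        ≤ ‖∏ k : I, LinearMap.det ((gs n k).toLinearEquiv : V k →ₗ[ℂ] V k)‖ := by
      intro n
      have hdetinv : ∀ k, LinearMap.det ((gs n k).toLinearEquiv : V k →ₗ[ℂ] V k)
          = (LinearMap.det ((Ginv n k : V k →L[ℂ] V k) : V k →ₗ[ℂ] V k))⁻¹ := by
        intro k
        have h1 := ContinuousLinearEquiv.det_coe_symm (gs n k)
        have h2 : ((gs n k : V k →L[ℂ] V k)).det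
            = LinearMap.det ((gs n k).toLinearEquiv : V k →ₗ[ℂ] V k) := rfl
        have h3 : (((gs n k).symm : V k →L[ℂ] V k)).det
            = LinearMap.det ((Ginv n k : V k →L[ℂ] V k) : V k →ₗ[ℂ] V k) := rfl
        rw [← h2, ← h3, h1, inv_inv]
      have hGle : ∀ k, ‖LinearMap.det ((Ginv n k : V k →L[ℂ] V k) : V k →ₗ[ℂ] V k)‖
          ≤ C k * max 1 (t n) ^ Module.finrank ℂ (V k) := by
        intro k
        refine le_trans (hCle k (Ginv n k)) ?_
        have h2 : ‖Ginv n k‖ ≤ t n := norm_le_pi_norm (Ginv n) k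
        have h3 : max 1 ‖Ginv n k‖ ≤ max 1 (t n) := max_le_max le_rfl h2
        have h4 : (0:ℝ) ≤ max 1 ‖Ginv n k‖ := le_trans zero_le_one (le_max_left _ _)
        exact mul_le_mul_of_nonneg_left (pow_le_pow_left₀ h4 h3 _) (hCpos k).le
      rw [show ‖∏ k : I, LinearMap.det ((gs n k).toLinearEquiv : V k →ₗ[ℂ] V k)‖
          = ∏ k : I, ‖LinearMap.det ((gs n k).toLinearEquiv : V k →ₗ[ℂ] V k)‖ by
        rw [norm_prod]]
      have heq : ∀ k : I, ‖LinearMap.det ((gs n k).toLinearEquiv : V k →ₗ[ℂ] V k)‖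
          = ‖LinearMap.det ((Ginv n k : V k →L[ℂ] V k) : V k →ₗ[ℂ] V k)‖⁻¹ := by
        intro k
        rw [hdetinv k, norm_inv]
      rw [Finset.prod_congr rfl fun k _ => heq k, Finset.prod_inv_distrib]
      have hprodle : ∏ k : I, ‖LinearMap.det ((Ginv n k : V k →L[ℂ] V k) : V k →ₗ[ℂ] V k)‖
          ≤ (∏ k : I, C k) * max 1 (t n) ^ D := by
        calc ∏ k : I, ‖LinearMap.det ((Ginv n k : V k →L[ℂ] V k) : V k →ₗ[ℂ] V k)‖
            ≤ ∏ k : I, (C k * max 1 (t n) ^ Module.finrank ℂ (V k)) :=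
              Finset.prod_le_prod (fun k _ => norm_nonneg _) (fun k _ => hGle k)
          _ = (∏ k : I, C k) * max 1 (t n) ^ D := by
              rw [Finset.prod_mul_distrib, ← Finset.prod_pow_eq_pow_sum]
      refine inv_anti₀ ?_ hprodle
      refine Finset.prod_pos fun k _ => ?_
      rw [norm_pos_iff]
      intro hzero
      have h5 := ContinuousLinearEquiv.det_coe_symm (gs n k)
      have h6 : LinearMap.det ((Ginv n k : V k →L[ℂ] V k) : V k →ₗ[ℂ] V k)
          = (LinearMap.det ((gs n k).toLinearEquiv : V k →ₗ[ℂ] V k))⁻¹ := h5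
      have h7 := LinearEquiv.isUnit_det' (gs n k).toLinearEquiv
      rw [h6] at hzero
      exact (IsUnit.ne_zero h7) (by
        have := inv_eq_zero.mp hzero
        exact this)
    -- the norms of the inverses tend to infinity
    have hMtop : Tendsto (fun n => (∏ k : I, C k) * max 1 (t n) ^ D) atTop atTop := by
      have hpos : ∀ n, (0:ℝ) < (∏ k : I, C k) * max 1 (t n) ^ D := fun n =>
        mul_pos hCC (pow_pos (hmaxpos n) D)
      have hinv0 : Tendsto (fun n => ((∏ k : I, C k) * max 1 (t n) ^ D)⁻¹) atTop (𝓝 0) := by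
        refine squeeze_zero (fun n => (inv_pos.mpr (hpos n)).le) hlow ?_
        have := hdet.norm
        simpa using this
      have hinv0' : Tendsto (fun n => ((∏ k : I, C k) * max 1 (t n) ^ D)⁻¹) atTop (𝓝[>] 0) :=
        tendsto_nhdsWithin_of_tendsto_nhds_of_eventually_within _ hinv0
          (Filter.Eventually.of_forall fun n => inv_pos.mpr (hpos n))
      have h8 := hinv0'.inv_tendsto_nhdsGT_zero
      have h9 : (fun n => (((∏ k : I, C k) * max 1 (t n) ^ D)⁻¹))⁻¹
          = fun n => (∏ k : I, C k) * max 1 (t n) ^ D := by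
        funext n
        simp
      rwa [h9] at h8
    have hDpos : D ≠ 0 := by
      intro hD0
      have h9 : ∀ n : ℕ, (∏ k : I, C k) * max 1 (t n) ^ D = ∏ k : I, C k := by
        intro n; rw [hD0, pow_zero, mul_one]
      rw [funext h9] at hMtop
      obtain ⟨n, hn⟩ := (hMtop.eventually_ge_atTop ((∏ k : I, C k) + 1)).exists
      linarith
    have hmaxtop : Tendsto (fun n => max 1 (t n)) atTop atTop := by
      have h10 : Tendsto (fun n => max 1 (t n) ^ D) atTop atTop :=
        (tendsto_const_mul_atTop_of_pos hCC).mp hMtop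
      rw [tendsto_atTop] at h10 ⊢
      intro b
      filter_upwards [h10 (max 1 b ^ D)] with n hn
      by_contra hlt
      push_neg at hlt
      have hb1 : max 1 (t n) < max 1 b := lt_of_lt_of_le hlt (le_max_right _ _)
      have h11 : max 1 (t n) ^ D < max 1 b ^ D :=
        pow_lt_pow_left₀ hb1 (le_trans zero_le_one (le_max_left _ _)) hDpos
      exact absurd hn (not_le.mpr h11)
    have httop : Tendsto t atTop atTop := by
      refine tendsto_atTop_mono (fun n => ?_) (tendsto_atTop_add_const_right atTop (-1) hmaxtop)
      rcases le_total 1 (t n) with h | h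
      · rw [max_eq_right h]; linarith
      · rw [max_eq_left h]
        have := norm_nonneg (Ginv n)
        simp only [ht]
        linarith
    -- normalized inverses
    set s : ℕ → ℝ := fun n => (max 1 (t n))⁻¹ with hs
    have hs0 : Tendsto s atTop (𝓝 0) := tendsto_inv_atTop_zero.comp hmaxtop
    set σ : ℕ → ℂ := fun n => ((s n : ℝ) : ℂ) with hσ
    have hσ0 : Tendsto σ atTop (𝓝 0) := by
      have := (Complex.continuous_ofReal.tendsto 0).comp hs0
      simpa [hσ, Function.comp_def] using this
    set hseq : ℕ → ∀ k, V k →L[ℂ] V k := fun n => σ n • Ginv n with hhseq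
    have hseqnorm : ∀ n, ‖hseq n‖ = s n * t n := by
      intro n
      rw [hhseq]
      simp only
      have hns : ‖σ n • Ginv n‖ = ‖σ n‖ * ‖Ginv n‖ := by exact norm_smul (σ n) (Ginv n)
      rw [hns, hσ]
      simp [Complex.norm_real, abs_of_nonneg (inv_pos.mpr (hmaxpos n)).le, hs, ht]
    have hseqball : ∀ n, hseq n ∈ Metric.closedBall (0 : ∀ k, V k →L[ℂ] V k) 1 := by
      intro n
      rw [Metric.mem_closedBall, dist_zero_right, hseqnorm n]
      rw [hs]
      have h11 : t n ≤ max 1 (t n) := le_max_right _ _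
      calc (max 1 (t n))⁻¹ * t n ≤ (max 1 (t n))⁻¹ * max 1 (t n) :=
            mul_le_mul_of_nonneg_left h11 (inv_pos.mpr (hmaxpos n)).le
        _ = 1 := inv_mul_cancel₀ (hmaxpos n).ne'
    haveI : ProperSpace (∀ k, V k →L[ℂ] V k) := FiniteDimensional.proper ℂ _
    obtain ⟨hh, hhK, φ, hφ, hhlim⟩ :=
      (isCompact_closedBall (0 : ∀ k, V k →L[ℂ] V k) 1).tendsto_subseq hseqball
    -- the limit has norm one
    have hnorm1 : ‖hh‖ = 1 := by
      have hlim1 : Tendsto (fun m => ‖hseq (φ m)‖) atTop (𝓝 ‖hh‖) :=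
        (continuous_norm.tendsto hh).comp hhlim
      have htφ : Tendsto (t ∘ φ) atTop atTop := httop.comp hφ.tendsto_atTop
      have hev : ∀ᶠ m in atTop, ‖hseq (φ m)‖ = 1 := by
        filter_upwards [htφ.eventually_ge_atTop 1] with m hm
        have hm' : (1:ℝ) ≤ t (φ m) := hm
        rw [hseqnorm (φ m), hs]
        simp only
        rw [max_eq_right hm']
        exact inv_mul_cancel₀ (lt_of_lt_of_le zero_lt_one hm').ne'
      have hlim2 : Tendsto (fun m => ‖hseq (φ m)‖) atTop (𝓝 1) :=
        Tendsto.congr' (Filter.EventuallyEq.symm hev) tendsto_const_nhds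
      exact tendsto_nhds_unique hlim1 hlim2
    -- componentwise limits
    have happly : ∀ k : I, Tendsto (fun m => hseq (φ m) k) atTop (𝓝 (hh k)) := fun k =>
      ((continuous_apply k).tendsto hh).comp hhlim
    -- key relation for B
    have key1 : ∀ h : H, (B h).comp (hh (G.src h)) = (hh (G.tgt h)).comp (p.1.1 h) := by
      intro h
      have hrel : ∀ n, (B h).comp (hseq n (G.src h))
          = (hseq n (G.tgt h)).comp (actB G V (gs n) B h) := by
        intro n
        ext x
        simp only [hhseq, ContinuousLinearMap.comp_apply, ContinuousLinearMap.smul_apply,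
          Pi.smul_apply, map_smul, actB, ContinuousLinearMap.coe_coe,
          ContinuousLinearEquiv.coe_coe, hGinv]
        rw [ContinuousLinearEquiv.symm_apply_apply]
      have lim1 : Tendsto (fun m => (B h).comp (hseq (φ m) (G.src h))) atTop
          (𝓝 ((B h).comp (hh (G.src h)))) :=
        tendsto_clm_comp tendsto_const_nhds (happly (G.src h))
      have limact : Tendsto (fun m => actB G V (gs (φ m)) B h) atTop (𝓝 (p.1.1 h)) :=
        ((continuous_apply h).tendsto p.1.1).comp (hB'.comp hφ.tendsto_atTop)
      have lim2 : Tendsto (fun m => (hseq (φ m) (G.tgt h)).comp (actB G V (gs (φ m)) B h)) atTop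
          (𝓝 ((hh (G.tgt h)).comp (p.1.1 h))) :=
        tendsto_clm_comp (happly (G.tgt h)) limact
      exact tendsto_nhds_unique (lim1.congr fun m => hrel (φ m)) lim2
    -- key relation for j
    have key2 : ∀ k : I, (j k).comp (hh k) = 0 := by
      intro k
      have hrel : ∀ n, (j k).comp (hseq n k) = σ n • actJ V W (gs n) j k := by
        intro n
        ext x
        simp only [hhseq, ContinuousLinearMap.comp_apply, ContinuousLinearMap.smul_apply,
          Pi.smul_apply, map_smul, actJ, ContinuousLinearMap.coe_coe,
          ContinuousLinearEquiv.coe_coe, hGinv]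
      have lim1 : Tendsto (fun m => (j k).comp (hseq (φ m) k)) atTop
          (𝓝 ((j k).comp (hh k))) :=
        tendsto_clm_comp tendsto_const_nhds (happly k)
      have limact : Tendsto (fun m => actJ V W (gs (φ m)) j k) atTop (𝓝 (p.1.2.2 k)) :=
        ((continuous_apply k).tendsto p.1.2.2).comp (hJ'.comp hφ.tendsto_atTop)
      have limσ : Tendsto (fun m => σ (φ m)) atTop (𝓝 (0:ℂ)) := hσ0.comp hφ.tendsto_atTop
      have lim2 : Tendsto (fun m => σ (φ m) • actJ V W (gs (φ m)) j k) atTop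
          (𝓝 ((0:ℂ) • p.1.2.2 k)) := limσ.smul limact
      rw [zero_smul] at lim2
      exact tendsto_nhds_unique (lim1.congr fun m => hrel (φ m)) lim2
    -- apply stability
    have hbot : ∀ k : I, LinearMap.range ((hh k : V k →ₗ[ℂ] V k)) = ⊥ := by
      refine hst (fun k => LinearMap.range ((hh k : V k →ₗ[ℂ] V k))) ?_ ?_
      · rintro h x ⟨y, rfl⟩
        refine ⟨(p.1.1 h) y, ?_⟩
        have := congrArg (fun (A : V (G.src h) →L[ℂ] V (G.tgt h)) => A y) (key1 h)
        simpa using this.symm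
      · rintro k x ⟨y, rfl⟩
        have := congrArg (fun (A : V k →L[ℂ] W k) => A y) (key2 k)
        simpa using this
    have hhzero : hh = 0 := by
      funext k
      have h12 : ∀ x, hh k x = 0 := by
        intro x
        have := (Submodule.eq_bot_iff _).mp (hbot k) (hh k x) ⟨x, rfl⟩
        exact this
      ext x
      simp [h12 x]
    rw [hhzero, norm_zero] at hnorm1
    exact zero_ne_one hnorm1
  · intro hRHS S hSB hSj
    by_contra hne
    push_neg at hne
    obtain ⟨k₀, hk₀⟩ := hne
    obtain ⟨x₀, hx₀S, hx₀⟩ := Submodule.exists_mem_ne_zero_of_ne_bot hk₀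
    choose Ck hCk using fun k => Submodule.exists_isCompl (S k)
    set P : ∀ k, V k →ₗ[ℂ] V k :=
      fun k => (S k).subtype ∘ₗ (S k).projectionOnto (Ck k) (hCk k) with hP
    have hPmem : ∀ k x, P k x ∈ S k := fun k x =>
      ((S k).projectionOnto (Ck k) (hCk k) x).2
    have hPid : ∀ k, ∀ x ∈ S k, P k x = x := by
      intro k x hx
      have := Submodule.linearProjOfIsCompl_apply_left (hCk k) ⟨x, hx⟩
      simp only [hP, LinearMap.comp_apply]
      rw [show ((S k).projectionOnto (Ck k) (hCk k)) x
          = ((S k).projectionOnto (Ck k) (hCk k)) (⟨x, hx⟩ : S k) from rfl, this]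
      rfl
    set Q : ∀ k, V k →ₗ[ℂ] V k := fun k => LinearMap.id - P k with hQ
    have hPP : ∀ k x, P k (P k x) = P k x := fun k x => hPid k _ (hPmem k x)
    have hQS : ∀ k, ∀ x ∈ S k, Q k x = 0 := by
      intro k x hx
      simp [hQ, LinearMap.sub_apply, hPid k x hx]
    have hPPm : ∀ k, (P k) ∘ₗ (P k) = P k := fun k => LinearMap.ext fun x => hPP k x
    have hPQm : ∀ k, (P k) ∘ₗ (Q k) = 0 := by
      intro k; ext x
      simp [hQ, map_sub, hPP]
    have hQPm : ∀ k, (Q k) ∘ₗ (P k) = 0 := by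
      intro k; ext x
      simp [hQ, LinearMap.sub_apply, hPP]
    have hQQm : ∀ k, (Q k) ∘ₗ (Q k) = Q k := by
      intro k; ext x
      simp only [hQ, LinearMap.sub_apply, LinearMap.comp_apply, LinearMap.id_apply, map_sub]
      simp [hPP]
    set f : ℂ → ∀ k, V k →ₗ[ℂ] V k := fun t k => t • P k + Q k with hf
    have hfcomp : ∀ (a b : ℂ), a * b = 1 → ∀ k, (f a k) ∘ₗ (f b k) = LinearMap.id := by
      intro a b hab k
      ext x
      simp only [LinearMap.comp_apply, LinearMap.id_apply]
      have h1 : (f b k) x = b • P k x + (x - P k x) := by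
        simp [hf, hQ, LinearMap.sub_apply]
      have h2 : P k ((f b k) x) = b • P k x := by
        rw [h1, map_add, map_smul, map_sub, hPP]
        simp
      have h3 : (f a k) ((f b k) x)
          = a • P k ((f b k) x) + ((f b k) x - P k ((f b k) x)) := by
        simp [hf, hQ, LinearMap.sub_apply]
      rw [h3, h2, h1, smul_smul, hab, one_smul]
      abel
    set tn : ℕ → ℂ := fun n => ((n : ℂ) + 1)⁻¹ with htn
    have htn0 : ∀ n, tn n ≠ 0 := by
      intro n
      simp only [htn]
      exact inv_ne_zero (Nat.cast_add_one_ne_zero n)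
    set gseq : ℕ → ∀ k, V k ≃L[ℂ] V k := fun n k =>
      (LinearEquiv.ofLinear (f (tn n) k) (f (tn n)⁻¹ k)
        (hfcomp _ _ (mul_inv_cancel₀ (htn0 n)) k)
        (hfcomp _ _ (inv_mul_cancel₀ (htn0 n)) k)).toContinuousLinearEquiv with hgseq
    set Pc : ∀ k, V k →L[ℂ] V k := fun k => (P k).toContinuousLinearMap with hPc
    set Qc : ∀ k, V k →L[ℂ] V k := fun k => (Q k).toContinuousLinearMap with hQc
    have hg1 : ∀ n k, ((gseq n k : V k ≃L[ℂ] V k) : V k →L[ℂ] V k) = tn n • Pc k + Qc k := by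
      intro n k; ext x
      have e1 : ((gseq n k : V k ≃L[ℂ] V k) : V k →L[ℂ] V k) x = f (tn n) k x := by
        rw [hgseq]
        rw [ContinuousLinearEquiv.coe_coe, LinearEquiv.coe_toContinuousLinearEquiv',
          LinearEquiv.ofLinear_apply]
      rw [e1]
      simp [hf, hPc, hQc]
    have hg2 : ∀ n k, (((gseq n k).symm : V k ≃L[ℂ] V k) : V k →L[ℂ] V k)
        = (tn n)⁻¹ • Pc k + Qc k := by
      intro n k; ext x
      have e1 : (((gseq n k).symm : V k ≃L[ℂ] V k) : V k →L[ℂ] V k) x = f (tn n)⁻¹ k x := by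
        rw [hgseq]
        rw [ContinuousLinearEquiv.coe_coe, LinearEquiv.coe_toContinuousLinearEquiv_symm',
          LinearEquiv.ofLinear_symm_apply]
      rw [e1]
      simp [hf, hPc, hQc]
    set B0 : ∀ h : H, V (G.src h) →L[ℂ] V (G.tgt h) := fun h =>
      (Pc (G.tgt h)).comp ((B h).comp (Pc (G.src h)))
        + (Qc (G.tgt h)).comp ((B h).comp (Qc (G.src h))) with hB0
    set B1 : ∀ h : H, V (G.src h) →L[ℂ] V (G.tgt h) := fun h =>
      (Pc (G.tgt h)).comp ((B h).comp (Qc (G.src h))) with hB1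
    set i0 : ∀ k, W k →L[ℂ] V k := fun k => (Qc k).comp (i k) with hi0
    set i1 : ∀ k, W k →L[ℂ] V k := fun k => (Pc k).comp (i k) with hi1
    set j0 : ∀ k, V k →L[ℂ] W k := fun k => (j k).comp (Qc k) with hj0
    have hQBP : ∀ h : H, (Qc (G.tgt h)).comp ((B h).comp (Pc (G.src h))) = 0 := by
      intro h; ext x
      have hm : B h (P (G.src h) x) ∈ S (G.tgt h) := hSB h _ (hPmem _ x)
      simp [hPc, hQc, hQS _ _ hm]
    have hactB : ∀ n, actB G V (gseq n) B = fun h => B0 h + tn n • B1 h := by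
      intro n; funext h
      show ((gseq n (G.tgt h) : V (G.tgt h) →L[ℂ] V (G.tgt h)).comp (B h)).comp
          (((gseq n (G.src h)).symm : V (G.src h) →L[ℂ] V (G.src h)))
          = B0 h + tn n • B1 h
      rw [hg1, hg2]
      ext x
      have hz : Qc (G.tgt h) ((B h) (Pc (G.src h) x)) = 0 := by
        have hm : (B h) (P (G.src h) x) ∈ S (G.tgt h) := hSB h _ (hPmem _ x)
        simp [hPc, hQc, hQS _ _ hm]
      simp only [ContinuousLinearMap.comp_apply, ContinuousLinearMap.add_apply,
        ContinuousLinearMap.smul_apply, map_add, map_smul, smul_add, smul_smul, hz, smul_zero,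
        add_zero, hB0, hB1]
      rw [inv_mul_cancel₀ (htn0 n), one_smul]
      abel
    have hactI : ∀ n, actI V W (gseq n) i = fun k => i0 k + tn n • i1 k := by
      intro n; funext k
      rw [actI, hg1 n k]
      simp only [ContinuousLinearMap.add_comp, ContinuousLinearMap.smul_comp, hi0, hi1]
      abel
    have hactJ : ∀ n, actJ V W (gseq n) j = j0 := by
      intro n; funext k
      rw [actJ, hg2 n k]
      have hjP : (j k).comp (Pc k) = 0 := by
        ext x
        simp [hPc, hSj k _ (hPmem k x)]
      simp only [ContinuousLinearMap.comp_add, ContinuousLinearMap.comp_smul, hjP, smul_zero,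
        zero_add, hj0]
    have hdet_eq : ∀ n k,
        LinearMap.det ((gseq n k).toLinearEquiv : V k →ₗ[ℂ] V k) = LinearMap.det (f (tn n) k) := by
      intro n k
      rw [hgseq]
      rw [LinearEquiv.toLinearEquiv_toContinuousLinearEquiv]
      rfl
    have hfc : ∀ (t : ℂ) k,
        LinearMap.det (f t k) = LinearMap.det (((t • Pc k + Qc k : V k →L[ℂ] V k)) : V k →ₗ[ℂ] V k) := by
      intro t k
      congr 1
    set ψ : ℂ → (((∀ h : H, V (G.src h) →L[ℂ] V (G.tgt h)) ×
        (∀ k : I, W k →L[ℂ] V k) × (∀ k : I, V k →L[ℂ] W k)) × ℂ) := fun t =>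
      ((fun h => B0 h + t • B1 h, fun k => i0 k + t • i1 k, j0),
        ∏ k : I, LinearMap.det (((t • Pc k + Qc k : V k →L[ℂ] V k)) : V k →ₗ[ℂ] V k)) with hψ
    have hψcont : Continuous ψ := by
      apply Continuous.prodMk
      · apply Continuous.prodMk
        · exact continuous_pi fun h => continuous_const.add ((continuous_id.smul continuous_const))
        · apply Continuous.prodMk
          · exact continuous_pi fun k => continuous_const.add ((continuous_id.smul continuous_const))
          · exact continuous_const
      · apply continuous_finset_prod
        intro k _
        exact ContinuousLinearMap.continuous_det.comp
          ((continuous_id.smul continuous_const).add continuous_const)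
    have htnlim : Tendsto tn atTop (𝓝 0) := by
      have h1 : Tendsto (fun n : ℕ => (1 / ((n : ℝ) + 1) : ℝ)) atTop (𝓝 0) :=
        tendsto_one_div_add_atTop_nhds_zero_nat
      have h2 := (Complex.continuous_ofReal.tendsto 0).comp h1
      have h3 : (Complex.ofReal ∘ fun n : ℕ => (1 / ((n : ℝ) + 1) : ℝ)) = tn := by
        funext n
        simp only [htn, Function.comp, one_div, Complex.ofReal_inv]
        push_cast
        rfl
      rw [h3] at h2
      simpa using h2
    have hmem : ∀ n, ψ (tn n) ∈ {p : ((∀ h : H, V (G.src h) →L[ℂ] V (G.tgt h)) ×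
              (∀ k : I, W k →L[ℂ] V k) × (∀ k : I, V k →L[ℂ] W k)) × ℂ |
            ∃ g : ∀ k : I, V k ≃L[ℂ] V k,
              p = ((actB G V g B, actI V W g i, actJ V W g j),
                (∏ k : I, (LinearMap.det
                  ((g k).toLinearEquiv : V k →ₗ[ℂ] V k))⁻¹)⁻¹ * (1:ℂ))} := by
      intro n
      refine ⟨gseq n, ?_⟩
      have hcoord : (∏ k : I, (LinearMap.det
            ((gseq n k).toLinearEquiv : V k →ₗ[ℂ] V k))⁻¹)⁻¹ * (1:ℂ)
          = ∏ k : I, LinearMap.det (((tn n • Pc k + Qc k : V k →L[ℂ] V k)) : V k →ₗ[ℂ] V k) := by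
        rw [mul_one, Finset.prod_inv_distrib, inv_inv]
        refine Finset.prod_congr rfl fun k _ => ?_
        rw [hdet_eq n k]
        exact hfc (tn n) k
      rw [hψ]
      simp only [hactB n, hactI n, hactJ n, hcoord]
    have hclos : ψ 0 ∈ closure {p : ((∀ h : H, V (G.src h) →L[ℂ] V (G.tgt h)) ×
              (∀ k : I, W k →L[ℂ] V k) × (∀ k : I, V k →L[ℂ] W k)) × ℂ |
            ∃ g : ∀ k : I, V k ≃L[ℂ] V k,
              p = ((actB G V g B, actI V W g i, actJ V W g j),
                (∏ k : I, (LinearMap.det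
                  ((g k).toLinearEquiv : V k →ₗ[ℂ] V k))⁻¹)⁻¹ * (1:ℂ))} :=
      mem_closure_of_tendsto ((hψcont.tendsto 0).comp htnlim)
        (Filter.Eventually.of_forall hmem)
    have hψ0 : (ψ 0).2 = 0 := by
      rw [hψ]
      simp only
      apply Finset.prod_eq_zero (Finset.mem_univ k₀)
      rw [zero_smul, zero_add]
      apply det_eq_zero_of_ker_ne_bot
      rw [Submodule.ne_bot_iff]
      refine ⟨x₀, ?_, hx₀⟩
      rw [LinearMap.mem_ker]
      have : (((Qc k₀ : V k₀ →L[ℂ] V k₀)) : V k₀ →ₗ[ℂ] V k₀) x₀ = Q k₀ x₀ := by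
        simp [hQc]
      rw [this, hQS k₀ x₀ hx₀S]
    exact hRHS 1 one_ne_zero (ψ 0) hclos hψ0
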